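/- A 1-subhomogeneous continuous map u : X → Y (i.e., ‖u(λx)‖ ≥ |λ|‖u(x)‖ for all x ∈ X, λ scalar) satisfying the summing inequality (∑ⱼ ‖u(xⱼ)‖^p)^{1/p} ≤ C sup_{φ ∈ B_{X*}} (∑ⱼ |φ(xⱼ)|^p)^{1/p} for all finite families admits a Pietsch domination: there is a Borel probability measure μ on (B_{X*}, weak-star) such that ‖u(x)‖ ≤ C (∫_{B_{X*}} |φ(x)|^p dμ(φ))^{1/p} for all x ∈ X. -/

import Mathlib

open MeasureTheory

noncomputable section

variable {X : Type*} [NormedAddCommGroup X] [NormedSpace ℝ X] [CompleteSpace X]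
variable {Y : Type*} [NormedAddCommGroup Y] [NormedSpace ℝ Y] [CompleteSpace Y]

/-- The closed unit ball of the dual of `X`, with the weak-star topology. -/
def dualBall (X : Type*) [NormedAddCommGroup X] [NormedSpace ℝ X] : Set (WeakDual ℝ X) :=
  {φ | ∀ x : X, ‖φ x‖ ≤ ‖x‖}

instance (X : Type*) [NormedAddCommGroup X] [NormedSpace ℝ X] :
    MeasurableSpace (dualBall X) := borel _

instance (X : Type*) [NormedAddCommGroup X] [NormedSpace ℝ X] :
    BorelSpace (dualBall X) := ⟨rfl⟩

/-- `T` satisfies the absolutely `p`-summing inequality with constant `C`. -/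
def SummingWith (p : ℝ) (T : X →L[ℝ] Y) (C : ℝ) : Prop :=
  ∀ (m : ℕ) (x : Fin m → X),
    (∑ i, ‖T (x i)‖ ^ p) ^ (1 / p) ≤
      C * ⨆ φ : dualBall X, (∑ i, ‖(φ : WeakDual ℝ X) (x i)‖ ^ p) ^ (1 / p)

/-- `T` is absolutely `p`-summing. -/
def AbsolutelySumming (p : ℝ) (T : X →L[ℝ] Y) : Prop :=
  ∃ C : ℝ, 0 ≤ C ∧ SummingWith p T C

/-- The absolutely `p`-summing norm `π_p(T)`. -/
def piNorm (p : ℝ) (T : X →L[ℝ] Y) : ℝ :=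
  sInf {C : ℝ | 0 ≤ C ∧ SummingWith p T C}

/-- `M` is uniformly dominated by the measure `μ` on the dual unit ball. -/
def UniformlyDominatedBy (p : ℝ) (M : Set (X →L[ℝ] Y)) (μ : Measure (dualBall X)) : Prop :=
  ∀ T ∈ M, ∀ x : X, ‖T x‖ ^ p ≤ ∫ φ : dualBall X, ‖(φ : WeakDual ℝ X) x‖ ^ p ∂μ

/-!
For `x : X` let `q x φ = ‖u x‖ ^ p - C ^ p * |φ x| ^ p`, a continuous function on the weak-star
compact ball `B_{X*}`. By compactness the supremum in the summing inequality is attained, so every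
finite sum of the `q x` is nonpositive somewhere; by subhomogeneity `a * q x ≤ q (a ^ (1 / p) • x)`
for `a ≥ 0`, so the functions dominated by such sums form a convex set. Separating it from the open
cone of strictly positive functions (Hahn–Banach) yields a positive functional, i.e. by
Riesz–Markov–Kakutani a probability measure, under which every `q x` has nonpositive integral.
-/

open CompactlySupported

section CompactSpace

variable {K : Type*} [TopologicalSpace K] [CompactSpace K] [T2Space K]
  [MeasurableSpace K] [BorelSpace K]

theorem exists_isProbabilityMeasure_integral_eq (Λ : C(K, ℝ) →ₚ[ℝ] ℝ) (hΛ : Λ 1 = 1) :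
    ∃ μ : Measure K, IsProbabilityMeasure μ ∧ ∀ f : C(K, ℝ), ∫ x, f x ∂μ = Λ f := by
  let Λc : C_c(K, ℝ) →ₚ[ℝ] ℝ := PositiveLinearMap.mk₀
    { toFun f := Λ f.toContinuousMap
      map_add' f g := map_add Λ _ _
      map_smul' c f := map_smul Λ c _ }
    (fun f hf => Λ.map_nonneg hf)
  have hΛc (f : C(K, ℝ)) : ∫ x, f x ∂(RealRMK.rieszMeasure Λc) = Λ f :=
    RealRMK.integral_rieszMeasure Λc (CompactlySupportedContinuousMap.continuousMapEquiv f)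
  refine ⟨RealRMK.rieszMeasure Λc, ⟨?_⟩, hΛc⟩
  have h1 := hΛc 1
  simp only [ContinuousMap.one_apply, integral_const, smul_eq_mul, mul_one, hΛ] at h1
  exact (ENNReal.toReal_eq_one_iff _).mp h1

theorem exists_isProbabilityMeasure_forall_integral_nonpos {Q : Set C(K, ℝ)}
    (hQ : Convex ℝ Q) (hQ0 : 0 ∈ Q) (hQneg : ∀ g ∈ Q, ∃ x, g x ≤ 0) :
    ∃ μ : Measure K, IsProbabilityMeasure μ ∧ ∀ g ∈ Q, ∫ x, g x ∂μ ≤ 0 := by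
  set P : Set C(K, ℝ) := {f | ∀ x, 0 < f x}
  have hPopen : IsOpen P := by
    simpa [Set.MapsTo] using ContinuousMap.isOpen_setOfPred_mapsTo isCompact_univ isOpen_Ioi
  have hPconv : Convex ℝ P := convex_iff_forall_pos.2 fun f hf g hg a b ha hb _ x =>
    add_pos (mul_pos ha (hf x)) (mul_pos hb (hg x))
  have hPQ : Disjoint P Q := Set.disjoint_left.2 fun g hgP hgQ =>
    let ⟨x, hx⟩ := hQneg g hgQ; (hgP x).not_ge hx
  obtain ⟨L, c, hLP, hLQ⟩ := geometric_hahn_banach_open hPconv hPopen hQ hPQ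
  have hconst (t : ℝ) : L (ContinuousMap.const K t) = t * L 1 := by
    rw [← smul_eq_mul, ← map_smul]; congr 1; ext; simp
  have hc0 : c ≤ 0 := by simpa using hLQ 0 hQ0
  have hL1 : L 1 < 0 := (hLP 1 fun _ => one_pos).trans_le hc0
  -- `P` is a cone, so the separating level `c` cannot be negative.
  have hc : c = 0 := by
    refine le_antisymm hc0 (not_lt.1 fun hc => ?_)
    have := hLP (ContinuousMap.const K (c / L 1)) fun _ => div_pos_of_neg_of_neg hc hL1
    rw [hconst, div_mul_cancel₀ _ hL1.ne] at this
    exact this.false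
  have hLnonneg (f : C(K, ℝ)) (hf : 0 ≤ f) : L f ≤ 0 := by
    refine le_of_forall_pos_lt_add fun ε hε => ?_
    have := hLP (f + ContinuousMap.const K (ε / -L 1)) fun x =>
      add_pos_of_nonneg_of_pos (hf x) (div_pos hε (neg_pos.2 hL1))
    rw [map_add, hconst, div_mul_eq_mul_div, div_neg, mul_div_cancel_right₀ _ hL1.ne] at this
    linarith
  obtain ⟨μ, hμ, hμΛ⟩ := exists_isProbabilityMeasure_integral_eq
    (PositiveLinearMap.mk₀ ((L 1)⁻¹ • (L : C(K, ℝ) →ₗ[ℝ] ℝ))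
      fun f hf => mul_nonneg_of_nonpos_of_nonpos (inv_nonpos.2 hL1.le) (hLnonneg f hf))
    (inv_mul_cancel₀ hL1.ne)
  refine ⟨μ, hμ, fun g hg => ?_⟩
  rw [hμΛ]
  exact mul_nonpos_of_nonpos_of_nonneg (inv_nonpos.2 hL1.le) (hc ▸ hLQ g hg)

theorem exists_isProbabilityMeasure_forall_integral_nonpos_of_sum {ι : Type*} (q : ι → K → ℝ)
    (hq : ∀ i, Continuous (q i)) (hsum : ∀ (m : ℕ) (i : Fin m → ι), ∃ x, ∑ j, q (i j) x ≤ 0)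
    (hsmul : ∀ a : ℝ, 0 ≤ a → ∀ i, ∃ i', ∀ x, a * q i x ≤ q i' x) :
    ∃ μ : Measure K, IsProbabilityMeasure μ ∧ ∀ i, ∫ x, q i x ∂μ ≤ 0 := by
  set Q : Set C(K, ℝ) := {g | ∃ (m : ℕ) (i : Fin m → ι), ∀ x, g x ≤ ∑ j, q (i j) x}
  have hQ : Convex ℝ Q := by
    rintro g ⟨m, i, hg⟩ h ⟨n, k, hh⟩ a b ha hb -
    choose i' hi' using fun j => hsmul a ha (i j)
    choose k' hk' using fun j => hsmul b hb (k j)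
    refine ⟨m + n, Fin.append i' k', fun x => ?_⟩
    simp only [Fin.sum_univ_add, Fin.append_left, Fin.append_right, ContinuousMap.add_apply,
      ContinuousMap.smul_apply, smul_eq_mul]
    calc a * g x + b * h x ≤ a * ∑ j, q (i j) x + b * ∑ j, q (k j) x := by
          gcongr
          exacts [hg x, hh x]
      _ = ∑ j, a * q (i j) x + ∑ j, b * q (k j) x := by rw [Finset.mul_sum, Finset.mul_sum]
      _ ≤ ∑ j, q (i' j) x + ∑ j, q (k' j) x := by
          gcongr with j _ j _
          exacts [hi' j x, hk' j x]
  obtain ⟨μ, hμ, hμQ⟩ := exists_isProbabilityMeasure_forall_integral_nonpos hQ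
    ⟨0, Fin.elim0, fun x => by simp⟩
    fun g ⟨m, i, hg⟩ => let ⟨x, hx⟩ := hsum m i; ⟨x, (hg x).trans hx⟩
  exact ⟨μ, hμ, fun i => hμQ ⟨q i, hq i⟩ ⟨1, fun _ => i, fun x => by simp⟩⟩

end CompactSpace

theorem le_mul_rpow_one_div_iff {a b C p : ℝ} (ha : 0 ≤ a) (hb : 0 ≤ b) (hC : 0 ≤ C)
    (hp : 0 < p) : a ≤ C * b ^ (1 / p) ↔ a ^ p ≤ C ^ p * b := by
  have hCb : C * b ^ (1 / p) = (C ^ p * b) ^ p⁻¹ := by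
    rw [Real.mul_rpow (by positivity) hb, Real.rpow_rpow_inv hC hp.ne', one_div]
  rw [hCb, Real.le_rpow_inv_iff_of_pos ha (by positivity) hp]

section DualBall

variable {E : Type*} [NormedAddCommGroup E] [NormedSpace ℝ E]

theorem dualBall_eq_preimage_closedBall :
    dualBall E = WeakDual.toStrongDual ⁻¹' Metric.closedBall 0 1 := by
  ext φ
  simp [dualBall, ContinuousLinearMap.opNorm_le_iff zero_le_one]

instance : CompactSpace (dualBall E) := isCompact_iff_compactSpace.mp <| by
  rw [dualBall_eq_preimage_closedBall]
  exact WeakDual.isCompact_closedBall 0 1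

instance : Nonempty (dualBall E) := ⟨⟨0, fun x => (norm_zero (E := ℝ)).trans_le (norm_nonneg x)⟩⟩

theorem continuous_norm_apply_rpow {p : ℝ} (hp : 0 ≤ p) (x : E) :
    Continuous fun φ : dualBall E => ‖(φ : WeakDual ℝ E) x‖ ^ p :=
  ((WeakDual.eval_continuous x).comp continuous_subtype_val).norm.rpow_const
    fun _ => Or.inr hp

theorem exists_sum_rpow_le_of_summing {F : Type*} [SeminormedAddCommGroup F] {p C : ℝ}
    (hp : 0 < p) (hC : 0 ≤ C) {u : E → F} {m : ℕ} {x : Fin m → E}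
    (hsum : (∑ j, ‖u (x j)‖ ^ p) ^ (1 / p) ≤
      C * ⨆ φ : dualBall E, (∑ j, ‖(φ : WeakDual ℝ E) (x j)‖ ^ p) ^ (1 / p)) :
    ∃ φ : dualBall E, ∑ j, ‖u (x j)‖ ^ p ≤ C ^ p * ∑ j, ‖(φ : WeakDual ℝ E) (x j)‖ ^ p := by
  have hA : Continuous fun φ : dualBall E => ∑ j, ‖(φ : WeakDual ℝ E) (x j)‖ ^ p :=
    continuous_finsetSum _ fun j _ => continuous_norm_apply_rpow hp.le (x j)
  have hA0 (φ : dualBall E) : 0 ≤ ∑ j, ‖(φ : WeakDual ℝ E) (x j)‖ ^ p :=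
    Finset.sum_nonneg fun j _ => by positivity
  obtain ⟨φ₀, -, hφ₀⟩ := isCompact_univ.exists_isMaxOn Set.univ_nonempty hA.continuousOn
  have hsup : (⨆ φ : dualBall E, (∑ j, ‖(φ : WeakDual ℝ E) (x j)‖ ^ p) ^ (1 / p)) ≤
      (∑ j, ‖(φ₀ : WeakDual ℝ E) (x j)‖ ^ p) ^ (1 / p) :=
    ciSup_le fun φ => Real.rpow_le_rpow (hA0 φ) (hφ₀ (Set.mem_univ φ)) (one_div_pos.2 hp).le
  refine ⟨φ₀, ?_⟩
  have key := (le_mul_rpow_one_div_iff (by positivity) (hA0 φ₀) hC hp).1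
    (hsum.trans (mul_le_mul_of_nonneg_left hsup hC))
  rwa [one_div, Real.rpow_inv_rpow (by positivity) hp.ne'] at key

theorem rpow_mul_sub_le_of_norm_smul {F : Type*} [SeminormedAddCommGroup F] {p C t : ℝ}
    (hp : 0 ≤ p) (ht : 0 ≤ t) {u : E → F} (hsub : ∀ (x : E) (l : ℝ), |l| * ‖u x‖ ≤ ‖u (l • x)‖)
    (x : E) (φ : WeakDual ℝ E) :
    t ^ p * (‖u x‖ ^ p - C ^ p * ‖φ x‖ ^ p) ≤ ‖u (t • x)‖ ^ p - C ^ p * ‖φ (t • x)‖ ^ p := by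
  have hu : t ^ p * ‖u x‖ ^ p ≤ ‖u (t • x)‖ ^ p := by
    rw [← Real.mul_rpow ht (norm_nonneg (u x))]
    exact Real.rpow_le_rpow (by positivity) (by simpa [abs_of_nonneg ht] using hsub x t) hp
  have hφ : ‖φ (t • x)‖ ^ p = t ^ p * ‖φ x‖ ^ p := by
    rw [map_smul, norm_smul, Real.norm_of_nonneg ht, Real.mul_rpow ht (norm_nonneg _)]
  rw [hφ]
  linarith

end DualBall

theorem stmt13_general (p : ℝ) (hp : 1 ≤ p) (u : X → Y)
    (hsub : ∀ (x : X) (l : ℝ), |l| * ‖u x‖ ≤ ‖u (l • x)‖)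
    (C : ℝ) (hC : 0 ≤ C)
    (hsum : ∀ (m : ℕ) (x : Fin m → X),
      (∑ j, ‖u (x j)‖ ^ p) ^ (1 / p) ≤
        C * ⨆ φ : dualBall X, (∑ j, ‖(φ : WeakDual ℝ X) (x j)‖ ^ p) ^ (1 / p)) :
    ∃ μ : Measure (dualBall X), IsProbabilityMeasure μ ∧
      ∀ x : X, ‖u x‖ ≤ C * (∫ φ : dualBall X, ‖(φ : WeakDual ℝ X) x‖ ^ p ∂μ) ^ (1 / p) := by
  have hp0 : 0 < p := one_pos.trans_le hp
  obtain ⟨μ, hμ, hμu⟩ := exists_isProbabilityMeasure_forall_integral_nonpos_of_sum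
    (fun x (φ : dualBall X) => ‖u x‖ ^ p - C ^ p * ‖(φ : WeakDual ℝ X) x‖ ^ p)
    (fun x => continuous_const.sub (continuous_const.mul (continuous_norm_apply_rpow hp0.le x)))
    (fun m x => by
      obtain ⟨φ, hφ⟩ := exists_sum_rpow_le_of_summing hp0 hC (hsum m x)
      exact ⟨φ, by simpa [Finset.sum_sub_distrib, Finset.mul_sum] using hφ⟩)
    (fun a ha x => ⟨a ^ p⁻¹ • x, fun φ => by
      simpa [Real.rpow_inv_rpow ha hp0.ne'] using
        rpow_mul_sub_le_of_norm_smul hp0.le (Real.rpow_nonneg ha p⁻¹) hsub x φ⟩)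
  refine ⟨μ, hμ, fun x => ?_⟩
  have hint := (continuous_norm_apply_rpow hp0.le x).integrable_of_hasCompactSupport
    (HasCompactSupport.of_compactSpace _) (μ := μ)
  have hx := hμu x
  rw [integral_sub (integrable_const _) (hint.const_mul _), integral_const, integral_const_mul]
    at hx
  simp only [probReal_univ, smul_eq_mul, one_mul, sub_nonpos] at hx
  exact (le_mul_rpow_one_div_iff (norm_nonneg _) (integral_nonneg fun _ => by positivity) hC
    hp0).2 hx

theorem stmt13 (p : ℝ) (hp : 1 ≤ p) (u : X → Y) (hu : Continuous u)
    (hsub : ∀ (x : X) (l : ℝ), |l| * ‖u x‖ ≤ ‖u (l • x)‖)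
    (C : ℝ) (hC : 0 ≤ C)
    (hsum : ∀ (m : ℕ) (x : Fin m → X),
      (∑ j, ‖u (x j)‖ ^ p) ^ (1 / p) ≤
        C * ⨆ φ : dualBall X, (∑ j, ‖(φ : WeakDual ℝ X) (x j)‖ ^ p) ^ (1 / p)) :
    ∃ μ : Measure (dualBall X), IsProbabilityMeasure μ ∧
      ∀ x : X, ‖u x‖ ≤ C * (∫ φ : dualBall X, ‖(φ : WeakDual ℝ X) x‖ ^ p ∂μ) ^ (1 / p) :=
  stmt13_general p hp u hsub C hC hsum
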